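/- Define R := c₁₂(pT L₁) + c₂₂(pT L₂) ⊆ W₂, N := {(a₁,a₂) ∈ A₁ × A₂ : d₁₂ a₁ = d₂₂ a₂, ρ_{A1} a₁ = 0, ρ_{A2} a₂ = 0, d₁₁ a₁ = 0, d₂₃ a₂ = 0}, K₁ := ker ρ_{A1} ∩ ker d₁₁ ∩ ker d₁₂ and K₂ := ker ρ_{A2} ∩ ker d₂₂ ∩ ker d₂₃. Then the map N → W₂* sending (a₁,a₂) to σ₂(d₁₂ a₁) takes values in the annihilator R° of R, and the sequence 0 → K₁ × K₂ → N → R° → 0, whose first map is the inclusion and whose second map is (a₁,a₂) ↦ σ₂(d₁₂ a₁), is exact. (Linear core of the short exact sequence controlling the kernel of the anchor of the strong fibre product of two 1-coisotropics.) -/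
import Mathlib


/-- A subspace `L ⊆ V × V*` is Lagrangian if it equals its orthogonal
complement with respect to the symmetric pairing
`⟨(v,α),(w,β)⟩ = α(w) + β(v)`. -/
def IsLagrangian {V : Type*} [AddCommGroup V] [Module ℝ V]
    (L : Submodule ℝ (V × Module.Dual ℝ V)) : Prop :=
  ∀ x : V × Module.Dual ℝ V, x ∈ L ↔ ∀ y ∈ L, x.2 y.1 + y.2 x.1 = 0

/-- Short exact sequence `0 → K₁ × K₂ → N → R° → 0` controlling the kernel of
the anchor of the strong fibre product of two 1-coisotropics (linear core). -/
theorem strong_fibre_product_kernel_exact_sequence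
    {A₁ A₂ V₁ V₂ B₁ B₂ B₃ W₁ W₂ W₃ : Type*}
    [AddCommGroup A₁] [Module ℝ A₁] [FiniteDimensional ℝ A₁]
    [AddCommGroup A₂] [Module ℝ A₂] [FiniteDimensional ℝ A₂]
    [AddCommGroup V₁] [Module ℝ V₁] [FiniteDimensional ℝ V₁]
    [AddCommGroup V₂] [Module ℝ V₂] [FiniteDimensional ℝ V₂]
    [AddCommGroup B₁] [Module ℝ B₁] [FiniteDimensional ℝ B₁]
    [AddCommGroup B₂] [Module ℝ B₂] [FiniteDimensional ℝ B₂]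
    [AddCommGroup B₃] [Module ℝ B₃] [FiniteDimensional ℝ B₃]
    [AddCommGroup W₁] [Module ℝ W₁] [FiniteDimensional ℝ W₁]
    [AddCommGroup W₂] [Module ℝ W₂] [FiniteDimensional ℝ W₂]
    [AddCommGroup W₃] [Module ℝ W₃] [FiniteDimensional ℝ W₃]
    (ρ₁ : B₁ →ₗ[ℝ] W₁) (σ₁ : B₁ →ₗ[ℝ] Module.Dual ℝ W₁)
    (ρ₂ : B₂ →ₗ[ℝ] W₂) (σ₂ : B₂ →ₗ[ℝ] Module.Dual ℝ W₂)
    (ρ₃ : B₃ →ₗ[ℝ] W₃) (σ₃ : B₃ →ₗ[ℝ] Module.Dual ℝ W₃)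
    (hH1₁ : ∀ b b' : B₁, σ₁ b (ρ₁ b') + σ₁ b' (ρ₁ b) = 0)
    (hH1₂ : ∀ b b' : B₂, σ₂ b (ρ₂ b') + σ₂ b' (ρ₂ b) = 0)
    (hH1₃ : ∀ b b' : B₃, σ₃ b (ρ₃ b') + σ₃ b' (ρ₃ b) = 0)
    (hH2₁ : ∀ b : B₁, ρ₁ b = 0 → σ₁ b = 0 → b = 0)
    (hH2₂ : ∀ b : B₂, ρ₂ b = 0 → σ₂ b = 0 → b = 0)
    (hH2₃ : ∀ b : B₃, ρ₃ b = 0 → σ₃ b = 0 → b = 0)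
    (hH3₁ : ∀ (w : W₁) (ξ : Module.Dual ℝ W₁),
      (∀ b : B₁, σ₁ b w + ξ (ρ₁ b) = 0) → ∃ b : B₁, ρ₁ b = w ∧ σ₁ b = ξ)
    (hH3₂ : ∀ (w : W₂) (ξ : Module.Dual ℝ W₂),
      (∀ b : B₂, σ₂ b w + ξ (ρ₂ b) = 0) → ∃ b : B₂, ρ₂ b = w ∧ σ₂ b = ξ)
    (hH3₃ : ∀ (w : W₃) (ξ : Module.Dual ℝ W₃),
      (∀ b : B₃, σ₃ b w + ξ (ρ₃ b) = 0) → ∃ b : B₃, ρ₃ b = w ∧ σ₃ b = ξ)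
    (ρA1 : A₁ →ₗ[ℝ] V₁) (ρA2 : A₂ →ₗ[ℝ] V₂)
    (c₁₁ : V₁ →ₗ[ℝ] W₁) (c₁₂ : V₁ →ₗ[ℝ] W₂)
    (c₂₂ : V₂ →ₗ[ℝ] W₂) (c₂₃ : V₂ →ₗ[ℝ] W₃)
    (d₁₁ : A₁ →ₗ[ℝ] B₁) (d₁₂ : A₁ →ₗ[ℝ] B₂)
    (d₂₂ : A₂ →ₗ[ℝ] B₂) (d₂₃ : A₂ →ₗ[ℝ] B₃)
    (hc₁₁ : c₁₁ ∘ₗ ρA1 = ρ₁ ∘ₗ d₁₁) (hc₁₂ : c₁₂ ∘ₗ ρA1 = ρ₂ ∘ₗ d₁₂)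
    (hc₂₂ : c₂₂ ∘ₗ ρA2 = ρ₂ ∘ₗ d₂₂) (hc₂₃ : c₂₃ ∘ₗ ρA2 = ρ₃ ∘ₗ d₂₃)
    (htrans : ∀ b : B₂, ∃ (a₁ : A₁) (a₂ : A₂), d₁₂ a₁ + d₂₂ a₂ = b)
    (L₁ : Submodule ℝ (V₁ × Module.Dual ℝ V₁)) (hL₁ : IsLagrangian L₁)
    (L₂ : Submodule ℝ (V₂ × Module.Dual ℝ V₂)) (hL₂ : IsLagrangian L₂)
    (hM1 : ∀ a : A₁, (ρA1 a, σ₁ (d₁₁ a) ∘ₗ c₁₁ - σ₂ (d₁₂ a) ∘ₗ c₁₂) ∈ L₁)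
    (hM2 : ∀ a : A₂, (ρA2 a, σ₂ (d₂₂ a) ∘ₗ c₂₂ - σ₃ (d₂₃ a) ∘ₗ c₂₃) ∈ L₂)
    (hN1 : ∀ (v : V₁) (α : Module.Dual ℝ V₁) (b₁ : B₁) (b₂ : B₂),
      (v, α) ∈ L₁ → c₁₁ v = ρ₁ b₁ → c₁₂ v = ρ₂ b₂ →
      α = σ₁ b₁ ∘ₗ c₁₁ - σ₂ b₂ ∘ₗ c₁₂ →
      ∃ a : A₁, ρA1 a = v ∧ d₁₁ a = b₁ ∧ d₁₂ a = b₂)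
    (hN2 : ∀ (v : V₂) (α : Module.Dual ℝ V₂) (b₂ : B₂) (b₃ : B₃),
      (v, α) ∈ L₂ → c₂₂ v = ρ₂ b₂ → c₂₃ v = ρ₃ b₃ →
      α = σ₂ b₂ ∘ₗ c₂₂ - σ₃ b₃ ∘ₗ c₂₃ →
      ∃ a : A₂, ρA2 a = v ∧ d₂₂ a = b₂ ∧ d₂₃ a = b₃)
    :
    -- the map N → W₂*, (a₁,a₂) ↦ σ₂(d₁₂ a₁), takes values in R°
    (∀ (a₁ : A₁) (a₂ : A₂), d₁₂ a₁ = d₂₂ a₂ → ρA1 a₁ = 0 → ρA2 a₂ = 0 →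
      d₁₁ a₁ = 0 → d₂₃ a₂ = 0 →
      ∀ w : W₂,
        (∃ (v₁ : V₁) (α₁ : Module.Dual ℝ V₁) (v₂ : V₂) (α₂ : Module.Dual ℝ V₂),
          (v₁, α₁) ∈ L₁ ∧ (v₂, α₂) ∈ L₂ ∧ w = c₁₂ v₁ + c₂₂ v₂) →
        σ₂ (d₁₂ a₁) w = 0) ∧
    -- exactness at N: the kernel of (a₁,a₂) ↦ σ₂(d₁₂ a₁) is K₁ × K₂
    (∀ (a₁ : A₁) (a₂ : A₂), d₁₂ a₁ = d₂₂ a₂ → ρA1 a₁ = 0 → ρA2 a₂ = 0 →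
      d₁₁ a₁ = 0 → d₂₃ a₂ = 0 →
      (σ₂ (d₁₂ a₁) = 0 ↔
        ((ρA1 a₁ = 0 ∧ d₁₁ a₁ = 0 ∧ d₁₂ a₁ = 0) ∧
         (ρA2 a₂ = 0 ∧ d₂₂ a₂ = 0 ∧ d₂₃ a₂ = 0)))) ∧
    -- exactness at R°: surjectivity of (a₁,a₂) ↦ σ₂(d₁₂ a₁)
    (∀ ξ : Module.Dual ℝ W₂,
      (∀ w : W₂,
        (∃ (v₁ : V₁) (α₁ : Module.Dual ℝ V₁) (v₂ : V₂) (α₂ : Module.Dual ℝ V₂),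
          (v₁, α₁) ∈ L₁ ∧ (v₂, α₂) ∈ L₂ ∧ w = c₁₂ v₁ + c₂₂ v₂) → ξ w = 0) →
      ∃ (a₁ : A₁) (a₂ : A₂),
        (d₁₂ a₁ = d₂₂ a₂ ∧ ρA1 a₁ = 0 ∧ ρA2 a₂ = 0 ∧ d₁₁ a₁ = 0 ∧ d₂₃ a₂ = 0) ∧
        σ₂ (d₁₂ a₁) = ξ) := by

  -- a key consequence: elements of R are annihilated appropriately
  refine ⟨?_, ?_, ?_⟩
  · -- part 1
    rintro a₁ a₂ hd hρ1 hρ2 hd11 hd23 w ⟨v₁, α₁, v₂, α₂, h1, h2, rfl⟩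
    have e1 : σ₂ (d₁₂ a₁) (c₁₂ v₁) = 0 := by
      have hx := hM1 a₁
      have := (hL₁ _).mp hx (v₁, α₁) h1
      simp only [hρ1, hd11, map_zero, LinearMap.zero_comp, zero_sub,
        LinearMap.sub_apply, LinearMap.neg_apply, LinearMap.comp_apply,
        LinearMap.zero_apply] at this
      linarith
    have e2 : σ₂ (d₁₂ a₁) (c₂₂ v₂) = 0 := by
      have hx := hM2 a₂
      have := (hL₂ _).mp hx (v₂, α₂) h2
      rw [hd]
      simp only [hρ2, hd23, map_zero, LinearMap.zero_comp, sub_zero,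
        LinearMap.sub_apply, LinearMap.comp_apply, LinearMap.zero_apply] at this
      linarith
    simp [map_add, e1, e2]
  · -- part 2
    intro a₁ a₂ hd hρ1 hρ2 hd11 hd23
    constructor
    · intro hσ
      have hρb : ρ₂ (d₁₂ a₁) = 0 := by
        have := congrArg c₁₂ hρ1
        rw [map_zero] at this
        have h2 := LinearMap.congr_fun hc₁₂ a₁
        simp only [LinearMap.comp_apply] at h2
        rw [← h2, this]
      have hb : d₁₂ a₁ = 0 := hH2₂ _ hρb hσ
      exact ⟨⟨hρ1, hd11, hb⟩, ⟨hρ2, hd ▸ hb, hd23⟩⟩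
    · rintro ⟨⟨_, _, hb⟩, _⟩
      rw [hb, map_zero]
  · -- part 3: surjectivity
    intro ξ hξ
    -- every ρ₂ b' lies in R
    have hR : ∀ b' : B₂, ξ (ρ₂ b') = 0 := by
      intro b'
      obtain ⟨a₁, a₂, hab⟩ := htrans b'
      apply hξ
      refine ⟨ρA1 a₁, _, ρA2 a₂, _, hM1 a₁, hM2 a₂, ?_⟩
      have h1 := LinearMap.congr_fun hc₁₂ a₁
      have h2 := LinearMap.congr_fun hc₂₂ a₂
      simp only [LinearMap.comp_apply] at h1 h2
      rw [h1, h2, ← map_add, hab]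
    -- elements of R are annihilated by ξ directly
    have hRL₁ : ∀ v₁ : V₁, (v₁, (0 : Module.Dual ℝ V₁)) ∈ L₁ → ∀ α₁, (v₁, α₁) ∈ L₁ → True := fun _ _ _ _ => trivial
    have hR₁ : ∀ (v : V₁) (α : Module.Dual ℝ V₁), (v, α) ∈ L₁ → ξ (c₁₂ v) = 0 := by
      intro v α hv
      apply hξ
      exact ⟨v, α, 0, 0, hv, L₂.zero_mem, by simp⟩
    have hR₂ : ∀ (v : V₂) (α : Module.Dual ℝ V₂), (v, α) ∈ L₂ → ξ (c₂₂ v) = 0 := by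
      intro v α hv
      apply hξ
      exact ⟨0, 0, v, α, L₁.zero_mem, hv, by simp⟩
    -- find b with ρ₂ b = 0, σ₂ b = ξ
    obtain ⟨b, hρb, hσb⟩ := hH3₂ 0 ξ (by intro b'; simp [hR b'])
    -- build a₁ via hN1
    have hmem1 : ((0 : V₁), σ₁ (0 : B₁) ∘ₗ c₁₁ - σ₂ b ∘ₗ c₁₂) ∈ L₁ := by
      rw [hL₁]
      rintro ⟨v₁, α₁⟩ h1
      simp only [map_zero, LinearMap.zero_comp, zero_sub, LinearMap.neg_apply,
        LinearMap.comp_apply, map_zero, add_zero]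
      rw [hσb]
      simp [hR₁ v₁ α₁ h1]
    obtain ⟨a₁, ha1ρ, ha1d11, ha1d12⟩ := hN1 0 _ 0 b hmem1 (by simp) (by simp [hρb]) rfl
    have hmem2 : ((0 : V₂), σ₂ b ∘ₗ c₂₂ - σ₃ (0 : B₃) ∘ₗ c₂₃) ∈ L₂ := by
      rw [hL₂]
      rintro ⟨v₂, α₂⟩ h2
      simp only [map_zero, LinearMap.zero_comp, sub_zero,
        LinearMap.comp_apply, add_zero]
      rw [hσb]
      simp [hR₂ v₂ α₂ h2]
    obtain ⟨a₂, ha2ρ, ha2d22, ha2d23⟩ := hN2 0 _ b 0 hmem2 (by simp [hρb]) (by simp) rfl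
    exact ⟨a₁, a₂, ⟨by rw [ha1d12, ha2d22], ha1ρ, ha2ρ, ha1d11, ha2d23⟩, by rw [ha1d12, hσb]⟩
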